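/- If f : ℝ² → ℂ is integrable, then for every φ the function τ ↦ R[f](τ, φ) is integrable on ℝ, and its 1D Fourier transform at λ ∈ ℝ equals F[f](λ·n(φ)); moreover λ ↦ F[f](λ·n(φ)) is continuous and bounded by ‖f‖₁. -/
import Mathlib

open MeasureTheory Real Set

noncomputable def radon (f : ℝ × ℝ → ℂ) (τ φ : ℝ) : ℂ :=
  ∫ s : ℝ, f (τ * Real.cos φ - s * Real.sin φ, τ * Real.sin φ + s * Real.cos φ)

noncomputable def fourier2 (f : ℝ × ℝ → ℂ) (q : ℝ × ℝ) : ℂ :=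
  ∫ x : ℝ × ℝ, f x * Complex.exp (-Complex.I * ((q.1 * x.1 + q.2 * x.2 : ℝ) : ℂ))

noncomputable def rotEquiv (φ : ℝ) : (ℝ × ℝ) ≃ₗ[ℝ] (ℝ × ℝ) where
  toFun p := (p.1 * Real.cos φ - p.2 * Real.sin φ, p.1 * Real.sin φ + p.2 * Real.cos φ)
  invFun p := (p.1 * Real.cos φ + p.2 * Real.sin φ, -p.1 * Real.sin φ + p.2 * Real.cos φ)
  map_add' p q := by simp [Prod.ext_iff]; constructor <;> ring
  map_smul' c p := by simp [Prod.ext_iff]; constructor <;> ring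
  left_inv p := by
    have h := Real.sin_sq_add_cos_sq φ
    simp only [Prod.ext_iff]
    exact ⟨by linear_combination p.1 * h, by linear_combination p.2 * h⟩
  right_inv p := by
    have h := Real.sin_sq_add_cos_sq φ
    simp only [Prod.ext_iff]
    exact ⟨by linear_combination p.1 * h, by linear_combination p.2 * h⟩

lemma rot_det (φ : ℝ) : LinearMap.det ((rotEquiv φ).toLinearMap) = 1 := by
  rw [← LinearMap.det_toMatrix (Module.Basis.finTwoProd ℝ), Matrix.det_fin_two]
  simp [LinearMap.toMatrix_apply, rotEquiv, Module.Basis.finTwoProd]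
  nlinarith [Real.sin_sq_add_cos_sq φ]

lemma rot_mp (φ : ℝ) : MeasurePreserving (rotEquiv φ) (volume : Measure (ℝ × ℝ)) volume := by
  have hc : Continuous (rotEquiv φ) := (rotEquiv φ).toLinearMap.continuous_of_finiteDimensional
  refine ⟨hc.measurable, ?_⟩
  rw [show (⇑(rotEquiv φ)) = ⇑((rotEquiv φ).toLinearMap) from rfl,
    Measure.map_linearMap_addHaar_eq_smul_addHaar volume (by simp [rot_det])]
  simp [rot_det]

lemma rot_emb (φ : ℝ) : MeasurableEmbedding (rotEquiv φ) :=
  ((rotEquiv φ).toContinuousLinearEquiv.toHomeomorph).measurableEmbedding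

lemma norm_exp_neg_I_mul (r : ℝ) : ‖Complex.exp (-Complex.I * (r : ℂ))‖ = 1 := by
  rw [show -Complex.I * (r:ℂ) = ((-r : ℝ):ℂ) * Complex.I by push_cast; ring]
  exact Complex.norm_exp_ofReal_mul_I _

/-- Integrability in τ of the Radon transform, the Fourier slice identity, and
continuity/boundedness of the Fourier slice. -/
theorem radon_integrable_fourier_slice (f : ℝ × ℝ → ℂ) (hf : Integrable f) (φ : ℝ) :
    Integrable (fun τ : ℝ => radon f τ φ) ∧
    (∀ lam : ℝ, (∫ τ : ℝ, Complex.exp (-Complex.I * (lam : ℂ) * (τ : ℂ)) * radon f τ φ)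
        = fourier2 f (lam * Real.cos φ, lam * Real.sin φ)) ∧
    Continuous (fun lam : ℝ => fourier2 f (lam * Real.cos φ, lam * Real.sin φ)) ∧
    (∀ lam : ℝ, ‖fourier2 f (lam * Real.cos φ, lam * Real.sin φ)‖ ≤ ∫ x : ℝ × ℝ, ‖f x‖) := by
  have hpin := Real.sin_sq_add_cos_sq φ
  have hg : Integrable (fun p : ℝ × ℝ => f (rotEquiv φ p)) :=
    (rot_mp φ).integrable_comp_emb (rot_emb φ) |>.mpr hf
  have hg' : Integrable (fun p : ℝ × ℝ => f (rotEquiv φ p)) (volume.prod volume) := by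
    rwa [← Measure.volume_eq_prod]
  have hradon : ∀ τ, radon f τ φ = ∫ s : ℝ, f (rotEquiv φ (τ, s)) := fun τ => rfl
  refine ⟨?_, ?_, ?_, ?_⟩
  · have := hg'.integral_prod_left
    simpa [hradon] using this
  · intro lam
    -- integrand on the plane
    set F : ℝ × ℝ → ℂ := fun x =>
      f x * Complex.exp (-Complex.I * (((lam * Real.cos φ) * x.1 + (lam * Real.sin φ) * x.2 : ℝ) : ℂ))
      with hF
    have hFint : Integrable F := by
      refine hf.norm.mono' (hf.aestronglyMeasurable.mul ?_) ?_
      · exact (Complex.continuous_exp.comp (by fun_prop)).aestronglyMeasurable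
      · filter_upwards with x
        rw [hF, norm_mul, norm_exp_neg_I_mul, mul_one]
    have key : ∫ x, F x = ∫ p : ℝ × ℝ, F (rotEquiv φ p) :=
      ((rot_mp φ).integral_comp (rot_emb φ) F).symm
    have hFrot : ∀ p : ℝ × ℝ,
        F (rotEquiv φ p) = Complex.exp (-Complex.I * (lam:ℂ) * (p.1:ℂ)) * f (rotEquiv φ p) := by
      intro p
      have hre : rotEquiv φ p = (p.1 * Real.cos φ - p.2 * Real.sin φ,
          p.1 * Real.sin φ + p.2 * Real.cos φ) := rfl
      rw [hF]
      simp only [hre]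
      have : (lam * Real.cos φ) * (p.1 * Real.cos φ - p.2 * Real.sin φ)
          + (lam * Real.sin φ) * (p.1 * Real.sin φ + p.2 * Real.cos φ) = lam * p.1 := by
        linear_combination lam * p.1 * hpin
      show f _ * Complex.exp (-Complex.I * ((_ : ℝ) : ℂ)) = _
      rw [this]
      push_cast
      ring_nf
    have hFrotInt : Integrable (fun p : ℝ × ℝ =>
        Complex.exp (-Complex.I * (lam:ℂ) * (p.1:ℂ)) * f (rotEquiv φ p)) (volume.prod volume) := by
      rw [← Measure.volume_eq_prod]
      refine hg.norm.mono' ?_ ?_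
      · exact (Complex.continuous_exp.comp (by fun_prop)).aestronglyMeasurable.mul
          hg.aestronglyMeasurable
      · filter_upwards with p
        rw [norm_mul, show -Complex.I * (lam:ℂ) * (p.1:ℂ) = -Complex.I * (((lam * p.1 : ℝ)):ℂ) by
          push_cast; ring, norm_exp_neg_I_mul, one_mul]
    calc ∫ τ : ℝ, Complex.exp (-Complex.I * (lam : ℂ) * (τ : ℂ)) * radon f τ φ
        = ∫ τ : ℝ, ∫ s : ℝ, Complex.exp (-Complex.I * (lam : ℂ) * (τ : ℂ)) * f (rotEquiv φ (τ, s)) := by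
          simp only [hradon, integral_const_mul]
      _ = ∫ p : ℝ × ℝ, Complex.exp (-Complex.I * (lam:ℂ) * (p.1:ℂ)) * f (rotEquiv φ p) := by
          rw [Measure.volume_eq_prod]
          exact integral_integral hFrotInt
      _ = ∫ p : ℝ × ℝ, F (rotEquiv φ p) := by
          exact integral_congr_ae (Filter.Eventually.of_forall fun p => (hFrot p).symm)
      _ = ∫ x, F x := key.symm
      _ = fourier2 f (lam * Real.cos φ, lam * Real.sin φ) := rfl
  · show Continuous fun lam : ℝ => ∫ x : ℝ × ℝ,
      f x * Complex.exp (-Complex.I * (((lam * Real.cos φ) * x.1 + (lam * Real.sin φ) * x.2 : ℝ) : ℂ))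
    refine continuous_of_dominated ?_ ?_ hf.norm ?_
    · intro lam
      exact hf.aestronglyMeasurable.mul
        ((Complex.continuous_exp.comp (by fun_prop)).aestronglyMeasurable)
    · intro lam
      filter_upwards with x
      rw [norm_mul, norm_exp_neg_I_mul, mul_one]
    · filter_upwards with x
      fun_prop
  · intro lam
    calc ‖fourier2 f (lam * Real.cos φ, lam * Real.sin φ)‖
        ≤ ∫ x : ℝ × ℝ, ‖f x * Complex.exp (-Complex.I *
            (((lam * Real.cos φ) * x.1 + (lam * Real.sin φ) * x.2 : ℝ) : ℂ))‖ :=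
          norm_integral_le_integral_norm _
      _ = ∫ x : ℝ × ℝ, ‖f x‖ := by
          refine integral_congr_ae (Filter.Eventually.of_forall fun x => ?_)
          simp only [norm_mul, norm_exp_neg_I_mul, mul_one]
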